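/- If 0 < λ_1 ≤ λ_2 ≤ ... ≤ λ_m, then 1 + λ_m E_1 + λ_{m-1}λ_m E_2 + ... + λ_1λ_2⋯λ_m E_m ≥ ∏_{i=1}^m (1 + λ_i²), where E_k is the k-th elementary symmetric function of λ_1,...,λ_m. -/

import Mathlib

open Finset

/-- The `k`-th elementary symmetric function of `l 0, ..., l (m-1)`. -/
def esymmVal (m : ℕ) (l : Fin m → ℝ) (k : ℕ) : ℝ :=
  ∑ s ∈ Finset.powersetCard k (Finset.univ : Finset (Fin m)), ∏ i ∈ s, l i

/-- The product of the top `k` values `l (m-k) ⋯ l (m-1)`. -/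
def topProd (m : ℕ) (l : Fin m → ℝ) (k : ℕ) : ℝ :=
  ∏ i ∈ Finset.univ.filter (fun i : Fin m => m - k ≤ (i : ℕ)), l i

/-!
Expanding, `∏ (1 + λᵢ²) = ∑ₖ ∑_{|S| = k} (∏_S λ)²`. Since `λ` is monotone and positive, each
`∏_S λ` with `|S| = k` is at most the product `λ_{m-k+1} ⋯ λ_m` of the `k` largest values, so
the `k`-th term is bounded by `λ_{m-k+1} ⋯ λ_m · ∑_{|S| = k} ∏_S λ = λ_{m-k+1} ⋯ λ_m · E_k`.
The comparison with the top product comes from splitting `S` and the top index set `T` along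
`S ∩ T`: every index of `S \ T` lies below every index of `T \ S`, and both sets have the same size.
-/

section

variable {ι R : Type*} [CommSemiring R] [LinearOrder R] [IsStrictOrderedRing R]

theorem Finset.prod_le_prod_of_card_eq_of_forall_le {A B : Finset ι} {f : ι → R}
    (hf : ∀ a ∈ A, 0 ≤ f a) (hcard : #A = #B) (hle : ∀ a ∈ A, ∀ b ∈ B, f a ≤ f b) :
    ∏ a ∈ A, f a ≤ ∏ b ∈ B, f b := by
  rcases A.eq_empty_or_nonempty with rfl | hA
  · simp [card_eq_zero.mp hcard.symm]
  obtain ⟨a₀, ha₀, hmax⟩ := A.exists_max_image f hA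
  calc ∏ a ∈ A, f a ≤ ∏ _a ∈ A, f a₀ := prod_le_prod hf hmax
    _ = ∏ _b ∈ B, f a₀ := by rw [prod_const, prod_const, hcard]
    _ ≤ ∏ b ∈ B, f b := prod_le_prod (fun _ _ => hf a₀ ha₀) (hle a₀ ha₀)

theorem Monotone.prod_le_prod_of_isUpperSet [LinearOrder ι] {f : ι → R} (hf : Monotone f)
    (h0 : ∀ i, 0 ≤ f i) {S T : Finset ι} (hT : IsUpperSet (T : Set ι)) (hcard : #S = #T) :
    ∏ i ∈ S, f i ≤ ∏ i ∈ T, f i := by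
  classical
  rw [← prod_inter_mul_prod_sdiff S T, ← prod_inter_mul_prod_sdiff T S, inter_comm]
  refine mul_le_mul_of_nonneg_left ?_ (prod_nonneg fun i _ => h0 i)
  refine prod_le_prod_of_card_eq_of_forall_le (fun i _ => h0 i) (card_sdiff_comm hcard) ?_
  intro a ha b hb
  rw [mem_sdiff] at ha hb
  exact hf (le_of_not_ge fun hba => ha.2 (hT hba hb.1))

end

theorem Fin.card_filter_sub_le_val {m k : ℕ} (hk : k ≤ m) :
    #{i : Fin m | m - k ≤ (i : ℕ)} = k := by
  rw [← card_map Fin.valEmbedding]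
  have hmap : ({i : Fin m | m - k ≤ (i : ℕ)} : Finset (Fin m)).map Fin.valEmbedding =
      Ico (m - k) m := by
    ext j
    simp only [mem_map, mem_filter, mem_univ, true_and, Fin.valEmbedding_apply, mem_Ico]
    exact ⟨fun ⟨i, hi, hij⟩ => hij ▸ ⟨hi, i.2⟩, fun ⟨hj, hjm⟩ => ⟨⟨j, hjm⟩, hj, rfl⟩⟩
  rw [hmap, Nat.card_Ico]; omega

theorem prod_le_topProd {m k : ℕ} {l : Fin m → ℝ} (hl : ∀ i, 0 ≤ l i) (hmono : Monotone l)
    {S : Finset (Fin m)} (hS : #S = k) : ∏ i ∈ S, l i ≤ topProd m l k := by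
  have hk : k ≤ m := hS ▸ (card_le_univ S).trans_eq (Fintype.card_fin m)
  refine hmono.prod_le_prod_of_isUpperSet hl (fun i j hij hi => ?_)
    (hS.trans (Fin.card_filter_sub_le_val hk).symm)
  simp only [coe_filter, mem_univ, true_and, Set.mem_ofPred_eq] at hi ⊢
  exact hi.trans hij

theorem prod_one_add_sq_eq_sum_sq {m : ℕ} (l : Fin m → ℝ) :
    ∏ i, (1 + l i ^ 2) = ∑ k ∈ range (m + 1), ∑ t ∈ powersetCard k univ, (∏ i ∈ t, l i) ^ 2 := by
  simp_rw [prod_one_add, ← prod_pow]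
  rw [sum_powerset, card_univ, Fintype.card_fin]

theorem stmt4 (m : ℕ) (l : Fin m → ℝ) (hl : ∀ i, 0 < l i) (hmono : Monotone l) :
    ∏ i : Fin m, (1 + (l i) ^ 2)
      ≤ ∑ k ∈ Finset.range (m + 1), topProd m l k * esymmVal m l k := by
  rw [prod_one_add_sq_eq_sum_sq]
  refine sum_le_sum fun k _ => ?_
  rw [esymmVal, mul_sum]
  refine sum_le_sum fun t ht => ?_
  have hnonneg : ∀ i, 0 ≤ l i := fun i => (hl i).le
  rw [sq]
  exact mul_le_mul_of_nonneg_right (prod_le_topProd hnonneg hmono (mem_powersetCard.mp ht).2)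
    (prod_nonneg fun i _ => hnonneg i)
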